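/- arXiv:2106.10447 — 2 statements merged into one kernel-verified Lean document; each statement's English description precedes it below -/
import Mathlib

section
/- Let G=(V,E) be a weighted locally finite graph and let Ω⊂V be a bounded domain with Ω°≠∅ and ∂Ω≠∅. Let p∈[1,∞) and f∈L¹(Ω). If u∈W^{1,p}_0(Ω) solves −Δ_p u = f in Ω° with u=0 on ∂Ω, then ∫_Ω f·H(u) d𝔪 ≥ 0 for every non-decreasing locally Lipschitz function H:ℝ→ℝ with H(0)=0. -/
open scoped BigOperators NNReal

/-- A weighted locally finite (non-oriented) graph on the vertex set `V`:
a symmetric non-negative weight `w` such that every vertex belongs to finitely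
many edges (`xy ∈ E` iff `w x y > 0`). -/
structure WLFG (V : Type*) where
  w : V → V → ℝ
  symm : ∀ x y, w x y = w y x
  nonneg : ∀ x y, 0 ≤ w x y
  locFin : ∀ x, {y | w x y ≠ 0}.Finite

namespace WLFG

variable {V : Type*} (G : WLFG V)

/-- The edge (adjacency) relation: `x ∼ y` iff `w x y > 0`. -/
def Adj (x y : V) : Prop := 0 < G.w x y

/-- The measure `𝔪(x) = ∑_{y ∈ V} w x y`. -/
noncomputable def mes (x : V) : ℝ := ∑ᶠ y, G.w x y

/-- `∫_A u d𝔪 = ∑_{x ∈ A} u x * 𝔪 x`. -/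
noncomputable def integral (A : Set V) (u : V → ℝ) : ℝ := ∑ᶠ x ∈ A, u x * G.mes x

/-- The vertex boundary `∂Ω = {x ∈ Ω : ∃ y ∉ Ω, xy ∈ E}`. -/
def bdry (Ω : Set V) : Set V := {x | x ∈ Ω ∧ ∃ y, y ∉ Ω ∧ G.Adj x y}

/-- The vertex interior `Ω° = Ω \ ∂Ω`. -/
def intr (Ω : Set V) : Set V := Ω \ G.bdry Ω

/-- `Ω` is connected as a subgraph: any two of its vertices are joined by a
path inside `Ω`. -/
def ConnectedIn (Ω : Set V) : Prop :=
  ∀ x ∈ Ω, ∀ y ∈ Ω, Relation.ReflTransGen (fun a b => a ∈ Ω ∧ b ∈ Ω ∧ G.Adj a b) x y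

/-- A bounded domain: a connected subgraph, bounded with respect to the vertex
path distance; for a locally finite graph this means connected and finite. -/
def IsBoundedDomain (Ω : Set V) : Prop := G.ConnectedIn Ω ∧ Ω.Finite

/-- The graph Laplacian `Δu(x) = (1/𝔪(x)) ∑_y w_{xy}(u(y) - u(x))`. -/
noncomputable def lap (u : V → ℝ) (x : V) : ℝ :=
  (1 / G.mes x) * ∑ᶠ y, G.w x y * (u y - u x)

/-- The gradient form `Γ(u,v)(x) = (1/(2𝔪(x))) ∑_y w_{xy}(u(y)-u(x))(v(y)-v(x))`. -/
noncomputable def gamma (u v : V → ℝ) (x : V) : ℝ :=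
  (1 / (2 * G.mes x)) * ∑ᶠ y, G.w x y * (u y - u x) * (v y - v x)

/-- The slope `|∇u|(x) = √(Γ(u,u)(x))`. -/
noncomputable def slope (u : V → ℝ) (x : V) : ℝ := Real.sqrt (G.gamma u u x)

/-- The `k`-slope: `|∇^k u| = |∇(Δ^{(k-1)/2} u)|` for `k` odd and `|Δ^{k/2} u|`
for `k` even. -/
noncomputable def mslope (k : ℕ) (u : V → ℝ) (x : V) : ℝ :=
  if k % 2 = 1 then G.slope ((G.lap)^[(k - 1) / 2] u) x
  else |(G.lap)^[k / 2] u x|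

/-- The `L^p(Ω)` norm `(∑_{x ∈ Ω} |u x|^p 𝔪 x)^(1/p)` for a real exponent `p`. -/
noncomputable def lpNorm (Ω : Set V) (p : ℝ) (u : V → ℝ) : ℝ :=
  (∑ᶠ x ∈ Ω, |u x| ^ p * G.mes x) ^ (1 / p)

/-- The `L^∞(Ω)` norm `max_{x ∈ Ω} |u x|`. -/
noncomputable def linfNorm (_G : WLFG V) (Ω : Set V) (u : V → ℝ) : ℝ :=
  sSup ((fun x => |u x|) '' Ω)

/-- The `W^{m,p}_0(Ω)` norm `‖∇^m u‖_{L^p(Ω)}`. -/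
noncomputable def wNorm (Ω : Set V) (k : ℕ) (p : ℝ) (u : V → ℝ) : ℝ :=
  G.lpNorm Ω p (G.mslope k u)

/-- Membership in `W^{m,p}_0(Ω)`: `|∇^j u| = 0` on `∂Ω` for all `0 ≤ j ≤ m-1`. -/
def MemW0 (Ω : Set V) (k : ℕ) (u : V → ℝ) : Prop :=
  ∀ j < k, ∀ x ∈ G.bdry Ω, G.mslope j u x = 0

/-- The `p`-Laplacian
`Δ_p u(x) = (1/𝔪(x)) ∑_{y ∈ Ω} (|∇u|^{p-2}(y) + |∇u|^{p-2}(x)) w_{xy} (u(y)-u(x))`. -/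
noncomputable def plap (Ω : Set V) (p : ℝ) (u : V → ℝ) (x : V) : ℝ :=
  (1 / G.mes x) *
    ∑ᶠ y ∈ Ω, (G.slope u y ^ (p - 2) + G.slope u x ^ (p - 2)) * G.w x y * (u y - u x)

/-- The distributional pairing `∫_Ω L_{m,p} u · φ d𝔪` defining the
`(m,p)`-Laplacian. -/
noncomputable def mpPairing (Ω : Set V) (k : ℕ) (p : ℝ) (u φ : V → ℝ) : ℝ :=
  if k % 2 = 1 then
    ∑ᶠ x ∈ Ω, G.mslope k u x ^ (p - 2) *
      G.gamma ((G.lap)^[(k - 1) / 2] u) ((G.lap)^[(k - 1) / 2] φ) x * G.mes x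
  else
    ∑ᶠ x ∈ Ω, G.mslope k u x ^ (p - 2) *
      ((G.lap)^[k / 2] u x) * ((G.lap)^[k / 2] φ x) * G.mes x

/-- `u ∈ W^{m,p}_0(Ω)` solves `L_{m,p} u = g` in `Ω°` (together with the
boundary conditions `|∇^j u| = 0` on `∂Ω`, `0 ≤ j ≤ m-1`), where the
`(m,p)`-Laplacian is defined in the distributional sense. -/
def IsMPSolution (Ω : Set V) (k : ℕ) (p : ℝ) (u g : V → ℝ) : Prop :=
  G.MemW0 Ω k u ∧
  ∃ L : V → ℝ,
    (∀ φ : V → ℝ, G.MemW0 Ω k φ →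
      G.mpPairing Ω k p u φ = G.integral Ω (fun x => L x * φ x)) ∧
    ∀ x ∈ G.intr Ω, L x = g x

end WLFG

/-- Lemma 4.1: if `u ∈ W^{1,p}_0(Ω)` solves `-Δ_p u = f` in `Ω°`
with `u = 0` on `∂Ω`, then `∫_Ω f · H(u) d𝔪 ≥ 0` for every non-decreasing locally
Lipschitz `H : ℝ → ℝ` with `H(0) = 0`. -/
theorem integral_H_nonneg {V : Type*} (G : WLFG V) (Ω : Set V)
    (hΩ : G.IsBoundedDomain Ω) (hint : (G.intr Ω).Nonempty) (hbd : (G.bdry Ω).Nonempty)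
    (p : ℝ) (hp : 1 ≤ p) (f : V → ℝ) (u : V → ℝ)
    (hu0 : ∀ x ∈ G.bdry Ω, u x = 0)
    (hsol : ∀ x ∈ G.intr Ω, -G.plap Ω p u x = f x)
    (H : ℝ → ℝ) (hHlip : LocallyLipschitz H) (hHmono : Monotone H) (hH0 : H 0 = 0) :
    0 ≤ G.integral Ω fun x => f x * H (u x) := by
  classical
  obtain ⟨hconn, hfin⟩ := hΩ
  set S := hfin.toFinset with hS
  have hcoe : Ω = ↑S := (hfin.coe_toFinset).symm
  -- every vertex of Ω has a neighbor
  have hadj : ∀ x ∈ Ω, ∃ y, 0 < G.w x y := by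
    obtain ⟨a, ha⟩ := hint
    obtain ⟨b, hb⟩ := hbd
    intro x hx
    have step : ∀ t, x ≠ t →
        Relation.ReflTransGen (fun a b => a ∈ Ω ∧ b ∈ Ω ∧ G.Adj a b) x t →
        ∃ y, 0 < G.w x y := by
      intro t hne hrel
      rcases hrel.cases_head with h | ⟨c, hc, _⟩
      · exact absurd h hne
      · exact ⟨c, hc.2.2⟩
    by_cases hxa : x = a
    · refine step b ?_ (hconn x hx b hb.1)
      rintro rfl
      exact ha.2 (hxa ▸ hb)
    · exact step a hxa (hconn x hx a ha.1)
  -- positivity of the measure on Ω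
  have hmes : ∀ x ∈ Ω, 0 < G.mes x := by
    intro x hx
    obtain ⟨y, hy⟩ := hadj x hx
    have hsupp : (Function.support fun z => G.w x z).Finite := G.locFin x
    have hmx : G.mes x = ∑ z ∈ hsupp.toFinset, G.w x z := finsum_eq_sum _ hsupp
    rw [hmx]
    have hyF : y ∈ hsupp.toFinset := by
      simp only [Set.Finite.mem_toFinset, Function.mem_support]
      exact ne_of_gt hy
    calc (0:ℝ) < G.w x y := hy
      _ ≤ ∑ z ∈ hsupp.toFinset, G.w x z :=
        Finset.single_le_sum (fun z _ => G.nonneg x z) hyF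
  set s : V → ℝ := fun z => G.slope u z ^ (p - 2) with hs
  set c : V → V → ℝ := fun x y => (s y + s x) * G.w x y with hc
  have hsnn : ∀ z, 0 ≤ s z := fun z => Real.rpow_nonneg (Real.sqrt_nonneg _) _
  have hcnn : ∀ x y, 0 ≤ c x y := fun x y =>
    mul_nonneg (add_nonneg (hsnn y) (hsnn x)) (G.nonneg x y)
  have hcsymm : ∀ x y, c x y = c y x := by
    intro x y
    simp only [hc]
    rw [G.symm]
    ring
  have hint_eq : G.integral Ω (fun x => f x * H (u x)) =
      ∑ x ∈ S, f x * H (u x) * G.mes x := by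
    rw [WLFG.integral, hcoe, finsum_mem_coe_finset]
  have hterm : ∀ x ∈ S, f x * H (u x) * G.mes x =
      ∑ y ∈ S, c x y * (u x - u y) * H (u x) := by
    intro x hxS
    have hxΩ : x ∈ Ω := by
      rw [hS, Set.Finite.mem_toFinset] at hxS; exact hxS
    by_cases hxb : x ∈ G.bdry Ω
    · rw [hu0 x hxb, hH0]
      simp
    · have hxint : x ∈ G.intr Ω := ⟨hxΩ, hxb⟩
      have hf := hsol x hxint
      have hm := (hmes x hxΩ).ne'
      have hplap : G.plap Ω p u x =
          (1 / G.mes x) * ∑ y ∈ S, (s y + s x) * G.w x y * (u y - u x) := by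
        rw [WLFG.plap, hcoe, finsum_mem_coe_finset]
      rw [← hf, hplap]
      have hrhs : ∑ y ∈ S, c x y * (u x - u y) * H (u x)
          = ∑ y ∈ S, -((s y + s x) * G.w x y * (u y - u x) * H (u x)) :=
        Finset.sum_congr rfl fun y _ => by simp only [hc]; ring
      rw [hrhs, Finset.sum_neg_distrib, ← Finset.sum_mul]
      field_simp
  rw [hint_eq, Finset.sum_congr rfl hterm]
  set A := ∑ x ∈ S, ∑ y ∈ S, c x y * (u x - u y) * H (u x) with hA
  have hswap : A = ∑ x ∈ S, ∑ y ∈ S, c x y * (u y - u x) * H (u y) := by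
    rw [hA, Finset.sum_comm]
    exact Finset.sum_congr rfl fun x _ => Finset.sum_congr rfl fun y _ => by
      rw [hcsymm]
  have hAA : A + A =
      ∑ x ∈ S, ∑ y ∈ S, c x y * (u x - u y) * (H (u x) - H (u y)) := by
    nth_rewrite 2 [hswap]
    rw [← Finset.sum_add_distrib]
    refine Finset.sum_congr rfl fun x _ => ?_
    rw [← Finset.sum_add_distrib]
    exact Finset.sum_congr rfl fun y _ => by ring
  have hB : 0 ≤ ∑ x ∈ S, ∑ y ∈ S, c x y * (u x - u y) * (H (u x) - H (u y)) := by
    refine Finset.sum_nonneg fun x _ => Finset.sum_nonneg fun y _ => ?_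
    rcases le_total (u y) (u x) with h | h
    · exact mul_nonneg (mul_nonneg (hcnn x y) (sub_nonneg.2 h))
        (sub_nonneg.2 (hHmono h))
    · have h1 : c x y * (u x - u y) ≤ 0 :=
        mul_nonpos_of_nonneg_of_nonpos (hcnn x y) (sub_nonpos.2 h)
      have h2 : H (u x) - H (u y) ≤ 0 := sub_nonpos.2 (hHmono h)
      have := mul_nonneg (neg_nonneg.2 h1) (neg_nonneg.2 h2)
      rwa [neg_mul_neg] at this
  linarith [hAA ▸ hB]
end

section
/- Let G=(V,E) be a weighted locally finite graph and let Ω⊂V be a bounded domain with Ω°≠∅ and ∂Ω≠∅. Let g:Ω×ℝ→ℝ be such that t↦g(x,t) is of class C¹ with ∂_t g(x,0)=0 for all x∈Ω, and set f̄(x)=g(x,0) for x∈Ω. Then there exist δ,ε>0 with the following property: if f∈L²(Ω) with ‖f−f̄‖_{L²(Ω)}<δ, then the problem −Δu + g(x,u) = f in Ω° with u=0 on ∂Ω admits a unique solution u∈W^{1,2}_0(Ω) with ‖u‖_{W^{1,2}_0(Ω)}<ε. -/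
open scoped BigOperators NNReal

/-!
On functions vanishing on `∂Ω` the problem is a finite system `Φ v = f` for the values `v` on
`Ω°`, where `Φ v = -Δv + g(·, v)`. Since `∂ₜ g(x, 0) = 0`, `Φ` is strictly differentiable at `0`
with derivative the Dirichlet Laplacian `-Δ`. Green's formula turns `-Δv = 0` into a vanishing
Dirichlet energy, and the Poincaré inequality, obtained by walking from `∂Ω` along paths in `Ω`,
then forces `v = 0`; so `-Δ` is invertible and the inverse function theorem gives existence and
uniqueness near `0` for the sup norm on `Ω°`. On the finite set `Ω` this norm is controlled by the
`L²(Ω)` norm (all masses are positive) and by the `W^{1,2}_0(Ω)` norm (Poincaré), and it controls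
the latter by continuity.
-/

open Set Filter Topology Metric Finset

theorem HasStrictFDerivAt.exists_ball_injOn {𝕜 E F : Type*} [NontriviallyNormedField 𝕜]
    [NormedAddCommGroup E] [NormedSpace 𝕜 E] [NormedAddCommGroup F] [NormedSpace 𝕜 F]
    [CompleteSpace E] {f : E → F} {f' : E ≃L[𝕜] F} {a : E}
    (hf : HasStrictFDerivAt f (f' : E →L[𝕜] F) a) : ∃ r > 0, InjOn f (ball a r) := by
  obtain ⟨r, hr, hsub⟩ := Metric.mem_nhds_iff.1 <|
    (hf.toOpenPartialHomeomorph f).open_source.mem_nhds hf.mem_toOpenPartialHomeomorph_source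
  exact ⟨r, hr, (hf.toOpenPartialHomeomorph f).injOn.mono hsub⟩

theorem hasStrictFDerivAt_pi_comp {𝕜 ι : Type*} [NontriviallyNormedField 𝕜] [Fintype ι]
    {h : ι → 𝕜 → 𝕜} {h' : ι → 𝕜} {v : ι → 𝕜} (hh : ∀ i, HasStrictDerivAt (h i) (h' i) (v i)) :
    HasStrictFDerivAt (fun v i => h i (v i))
      (ContinuousLinearMap.pi fun i =>
        h' i • ContinuousLinearMap.proj (R := 𝕜) (φ := fun _ => 𝕜) i) v :=
  hasStrictFDerivAt_pi'.2 fun i =>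
    ((hh i).comp_hasStrictFDerivAt v (hasStrictFDerivAt_apply i v)).congr_fderiv (by ext; simp)

theorem Set.domRestrict_mem_ball_zero {α : Type*} {t : Set α} [Fintype t] {h : α → ℝ}
    {K N r : ℝ} (hK : 0 < K) (hr : 0 < r) (hN : N < r / K) (hh : ∀ x ∈ t, |h x| ≤ K * N) :
    t.domRestrict h ∈ ball 0 r :=
  mem_ball_zero_iff.2 <| (pi_norm_lt_iff hr).2 fun x => by
    simpa using (hh x x.2).trans_lt (by rwa [lt_div_iff₀' hK] at hN)

namespace WLFG

variable {V : Type*} (G : WLFG V)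

noncomputable def nbrs (x : V) : Finset V := (G.locFin x).toFinset

noncomputable def energy (s : Finset V) (u : V → ℝ) : ℝ := ∑ x ∈ s, G.gamma u u x * G.mes x

variable {G}

theorem mem_nbrs {x y : V} : y ∈ G.nbrs x ↔ G.w x y ≠ 0 := by simp [nbrs]

theorem adj_iff_w_ne_zero {x y : V} : G.Adj x y ↔ G.w x y ≠ 0 := (G.nonneg x y).lt_iff_ne'

theorem mem_of_mem_intr_of_w_ne_zero {Ω : Set V} {x y : V} (hx : x ∈ G.intr Ω)
    (hxy : G.w x y ≠ 0) : y ∈ Ω := by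
  by_contra hy
  exact hx.2 ⟨hx.1, y, hy, adj_iff_w_ne_zero.2 hxy⟩

theorem finsum_w_mul_eq_sum {x : V} {F : V → ℝ} {t : Finset V}
    (h : ∀ y ∉ t, G.w x y * F y = 0) : ∑ᶠ y, G.w x y * F y = ∑ y ∈ t, G.w x y * F y :=
  finsum_eq_sum_of_support_subset _ fun y hy => by
    by_contra ht
    exact hy (h y ht)

theorem finsum_w_mul (x : V) (F : V → ℝ) :
    ∑ᶠ y, G.w x y * F y = ∑ y ∈ G.nbrs x, G.w x y * F y :=
  finsum_w_mul_eq_sum fun y hy => by simp_all [mem_nbrs]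

theorem sum_nbrs_w_mul_eq_sum {x : V} {F : V → ℝ} {t : Finset V}
    (h : ∀ y ∉ t, G.w x y * F y = 0) :
    ∑ y ∈ G.nbrs x, G.w x y * F y = ∑ y ∈ t, G.w x y * F y := by
  rw [← finsum_w_mul, finsum_w_mul_eq_sum h]

theorem mes_eq_sum (x : V) : G.mes x = ∑ y ∈ G.nbrs x, G.w x y := by
  rw [mes]
  simpa using G.finsum_w_mul x 1

theorem mes_nonneg (x : V) : 0 ≤ G.mes x := finsum_nonneg fun y => G.nonneg x y

theorem mes_pos_of_adj {x y : V} (h : G.Adj x y) : 0 < G.mes x := by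
  rw [mes_eq_sum]
  exact h.trans_le (single_le_sum (fun z _ => G.nonneg x z) (mem_nbrs.2 h.ne'))

theorem mes_pos_of_connectedIn {Ω : Set V} (hconn : G.ConnectedIn Ω)
    (hint : (G.intr Ω).Nonempty) (hbd : (G.bdry Ω).Nonempty) {x : V} (hx : x ∈ Ω) :
    0 < G.mes x := by
  obtain ⟨a, ha⟩ := hint
  obtain ⟨b, hb⟩ := hbd
  obtain ⟨y, hy, hxy⟩ : ∃ y ∈ Ω, x ≠ y := by
    by_cases hxa : x = a
    · exact ⟨b, hb.1, fun hxb => ha.2 (hxa ▸ hxb ▸ hb)⟩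
    · exact ⟨a, ha.1, hxa⟩
  obtain h | ⟨z, hz, -⟩ := (hconn x hx y hy).cases_head
  · exact absurd h hxy
  · exact mes_pos_of_adj hz.2.2

/-- The junk value `1 / 0 = 0` is harmless: `𝔪 x = 0` forces every weight at `x` to vanish. -/
theorem mes_mul_one_div_mes_mul_sum (x : V) (F : V → ℝ) :
    G.mes x * (1 / G.mes x * ∑ y ∈ G.nbrs x, G.w x y * F y) = ∑ y ∈ G.nbrs x, G.w x y * F y := by
  by_cases hm : G.mes x = 0
  · rw [mes_eq_sum, sum_eq_zero_iff_of_nonneg fun y _ => G.nonneg x y] at hm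
    rw [sum_eq_zero fun y hy => by rw [hm y hy, zero_mul], mul_zero, mul_zero]
  · rw [← mul_assoc, mul_one_div_cancel hm, one_mul]

theorem lap_eq_sum (u : V → ℝ) (x : V) :
    G.lap u x = 1 / G.mes x * ∑ y ∈ G.nbrs x, G.w x y * (u y - u x) := by
  rw [lap, finsum_w_mul]

theorem mes_mul_lap (u : V → ℝ) (x : V) :
    G.mes x * G.lap u x = ∑ y ∈ G.nbrs x, G.w x y * (u y - u x) := by
  rw [lap_eq_sum, mes_mul_one_div_mes_mul_sum]

theorem gamma_self_eq_sum (u : V → ℝ) (x : V) :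
    G.gamma u u x = 1 / 2 * (1 / G.mes x * ∑ y ∈ G.nbrs x, G.w x y * (u y - u x) ^ 2) := by
  simp only [gamma, mul_assoc, ← sq, finsum_w_mul]
  ring

theorem gamma_self_nonneg (u : V → ℝ) (x : V) : 0 ≤ G.gamma u u x := by
  rw [gamma_self_eq_sum]
  have := G.mes_nonneg x
  have := sum_nonneg fun y (_ : y ∈ G.nbrs x) => mul_nonneg (G.nonneg x y) (sq_nonneg (u y - u x))
  positivity

theorem energy_eq_sum (s : Finset V) (u : V → ℝ) :
    G.energy s u = ∑ x ∈ s, 1 / 2 * ∑ y ∈ G.nbrs x, G.w x y * (u y - u x) ^ 2 := by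
  refine sum_congr rfl fun x _ => ?_
  rw [gamma_self_eq_sum, mul_comm, mul_left_comm, mes_mul_one_div_mes_mul_sum]

theorem energy_nonneg (s : Finset V) (u : V → ℝ) : 0 ≤ G.energy s u :=
  sum_nonneg fun x _ => mul_nonneg (G.gamma_self_nonneg u x) (G.mes_nonneg x)

theorem continuous_energy (s : Finset V) : Continuous (G.energy s) := by
  rw [show G.energy s = _ from funext (energy_eq_sum s)]
  fun_prop

theorem w_mul_sq_le_two_mul_energy {s : Finset V} {c : V} (hc : c ∈ s) (z : V) (u : V → ℝ) :
    G.w c z * (u z - u c) ^ 2 ≤ 2 * G.energy s u := by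
  by_cases hz : G.w c z = 0
  · rw [hz, zero_mul]
    exact mul_nonneg zero_le_two (G.energy_nonneg s u)
  have hterm : ∀ x y, 0 ≤ G.w x y * (u y - u x) ^ 2 := fun x y =>
    mul_nonneg (G.nonneg x y) (sq_nonneg _)
  have hcz := single_le_sum (fun y _ => hterm c y) (mem_nbrs.2 hz)
  have hc := single_le_sum (f := fun x => 1 / 2 * ∑ y ∈ G.nbrs x, G.w x y * (u y - u x) ^ 2)
    (fun x _ => mul_nonneg (by norm_num) (sum_nonneg fun y _ => hterm x y)) hc
  rw [energy_eq_sum]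
  linarith

theorem energy_eq_sum_mul_neg_lap {s : Finset V} {u : V → ℝ}
    (hu : ∀ x ∉ G.intr ↑s, u x = 0) :
    G.energy s u = ∑ x ∈ s, u x * (G.mes x * -G.lap u x) := by
  -- Every edge leaving `s` joins two zeros of `u`, so the sums over neighbours may be taken
  -- over `s`, where they can be symmetrised.
  have hout : ∀ x, ∀ y ∉ s, G.w x y ≠ 0 → u x = 0 ∧ u y = 0 := fun x y hy hxy =>
    ⟨hu x fun hx => hy (mem_of_mem_intr_of_w_ne_zero hx hxy), hu y fun hy' => hy hy'.1⟩
  have hsum : ∀ x (F : ℝ → ℝ → ℝ), F 0 0 = 0 →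
      ∑ y ∈ G.nbrs x, G.w x y * F (u x) (u y) = ∑ y ∈ s, G.w x y * F (u x) (u y) :=
    fun x F hF => sum_nbrs_w_mul_eq_sum fun y hy => by
      by_cases hxy : G.w x y = 0
      · rw [hxy, zero_mul]
      · rw [(hout x y hy hxy).1, (hout x y hy hxy).2, hF, mul_zero]
  set A := ∑ x ∈ s, ∑ y ∈ s, G.w x y * ((u x - u y) * u x)
  have hswap : ∑ x ∈ s, ∑ y ∈ s, G.w x y * ((u x - u y) * u y) = -A := by
    rw [sum_comm, ← sum_neg_distrib]
    refine sum_congr rfl fun x _ => ?_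
    rw [← sum_neg_distrib]
    exact sum_congr rfl fun y _ => by rw [G.symm]; ring
  have hsq : ∑ x ∈ s, ∑ y ∈ s, G.w x y * (u y - u x) ^ 2
      = A - ∑ x ∈ s, ∑ y ∈ s, G.w x y * ((u x - u y) * u y) := by
    rw [← sum_sub_distrib]
    refine sum_congr rfl fun x _ => ?_
    rw [← sum_sub_distrib]
    exact sum_congr rfl fun y _ => by ring
  calc G.energy s u = ∑ x ∈ s, 1 / 2 * ∑ y ∈ s, G.w x y * (u y - u x) ^ 2 := by
        rw [energy_eq_sum]
        exact sum_congr rfl fun x _ => by rw [hsum x (fun a b => (b - a) ^ 2) (by ring)]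
    _ = 1 / 2 * ∑ x ∈ s, ∑ y ∈ s, G.w x y * (u y - u x) ^ 2 := (mul_sum _ _ _).symm
    _ = A := by rw [hsq, hswap]; ring
    _ = ∑ x ∈ s, u x * (G.mes x * -G.lap u x) := by
        refine sum_congr rfl fun x _ => ?_
        rw [mul_neg, mes_mul_lap, ← hsum x (fun a b => (a - b) * a) (by ring), mul_neg, mul_sum,
          ← sum_neg_distrib]
        exact sum_congr rfl fun y _ => by ring

theorem lpNorm_two_eq_sqrt (s : Finset V) (h : V → ℝ) :
    G.lpNorm ↑s 2 h = √(∑ x ∈ s, h x ^ 2 * G.mes x) := by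
  rw [lpNorm, finsum_mem_coe_finset, Real.sqrt_eq_rpow]
  congr 1
  exact sum_congr rfl fun x _ => by rw [Real.rpow_two, sq_abs]

theorem wNorm_one_two_eq_sqrt_energy (s : Finset V) (u : V → ℝ) :
    G.wNorm ↑s 1 2 u = √(G.energy s u) := by
  rw [wNorm, lpNorm_two_eq_sqrt, energy]
  congr 1
  exact sum_congr rfl fun x _ => by simp [mslope, slope, Real.sq_sqrt (G.gamma_self_nonneg u x)]

theorem exists_abs_le_mul_wNorm_of_reflTransGen {s : Finset V} {b x : V} (hb : b ∈ G.bdry ↑s)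
    (hbx : Relation.ReflTransGen (fun a c => a ∈ (s : Set V) ∧ c ∈ (s : Set V) ∧ G.Adj a c) b x) :
    ∃ C, ∀ u : V → ℝ, (∀ z ∈ G.bdry ↑s, u z = 0) → |u x| ≤ C * G.wNorm ↑s 1 2 u := by
  induction hbx with
  | refl => exact ⟨0, fun u hu => by simp [hu b hb]⟩
  | @tail c z _ hcz ih =>
    obtain ⟨C, hC⟩ := ih
    refine ⟨C + √(2 / G.w c z), fun u hu => ?_⟩
    have hedge : |u z - u c| ≤ √(2 / G.w c z) * G.wNorm ↑s 1 2 u := by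
      rw [wNorm_one_two_eq_sqrt_energy, ← Real.sqrt_mul (div_nonneg zero_le_two hcz.2.2.le),
        ← Real.sqrt_sq_eq_abs]
      refine Real.sqrt_le_sqrt ?_
      rw [div_mul_eq_mul_div, le_div_iff₀ hcz.2.2, mul_comm]
      exact w_mul_sq_le_two_mul_energy hcz.1 z u
    linarith [hC u hu, abs_sub_abs_le_abs_sub (u z) (u c)]

theorem exists_abs_le_mul_wNorm {s : Finset V} (hconn : G.ConnectedIn ↑s)
    (hbd : (G.bdry ↑s).Nonempty) :
    ∃ C > 0, ∀ u : V → ℝ, (∀ z ∈ G.bdry ↑s, u z = 0) → ∀ x ∈ s, |u x| ≤ C * G.wNorm ↑s 1 2 u := by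
  obtain ⟨b, hb⟩ := hbd
  choose! C hC using fun x (hx : x ∈ s) =>
    exists_abs_le_mul_wNorm_of_reflTransGen hb (hconn b hb.1 x hx)
  obtain ⟨M, hM⟩ := (s.image C).exists_le
  refine ⟨max M 1, by positivity, fun u hu x hx => (hC x hx u hu).trans ?_⟩
  rw [wNorm_one_two_eq_sqrt_energy]
  gcongr
  exact (hM _ (mem_image_of_mem C hx)).trans (le_max_left _ _)

theorem exists_abs_le_mul_lpNorm {s : Finset V} (hm : ∀ x ∈ s, 0 < G.mes x) :
    ∃ K > 0, ∀ h : V → ℝ, ∀ x ∈ s, |h x| ≤ K * G.lpNorm ↑s 2 h := by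
  obtain ⟨M, hM⟩ := (s.image fun x => 1 / √(G.mes x)).exists_le
  refine ⟨max M 1, by positivity, fun h x hx => ?_⟩
  have hx' : |h x| * √(G.mes x) ≤ G.lpNorm ↑s 2 h := by
    rw [lpNorm_two_eq_sqrt, ← Real.sqrt_sq_eq_abs, ← Real.sqrt_mul (sq_nonneg _)]
    exact Real.sqrt_le_sqrt (single_le_sum (f := fun x => h x ^ 2 * G.mes x)
      (fun y _ => mul_nonneg (sq_nonneg _) (G.mes_nonneg y)) hx)
  have hmx := Real.sqrt_pos.2 (hm x hx)
  calc |h x| = 1 / √(G.mes x) * (|h x| * √(G.mes x)) := by field_simp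
    _ ≤ max M 1 * G.lpNorm ↑s 2 h := by
      gcongr
      exact (hM _ (mem_image_of_mem _ hx)).trans (le_max_left _ _)

theorem lap_congr {Ω : Set V} {u u' : V → ℝ} {x : V} (hx : x ∈ G.intr Ω) (h : EqOn u u' Ω) :
    G.lap u x = G.lap u' x := by
  simp only [lap_eq_sum]
  congr 1
  exact sum_congr rfl fun y hy => by
    rw [h (mem_of_mem_intr_of_w_ne_zero hx (mem_nbrs.1 hy)), h hx.1]

theorem extend_eq_zero_of_not_mem {Ω : Set V} (v : G.intr Ω → ℝ) {x : V} (hx : x ∉ G.intr Ω) :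
    Function.extend Subtype.val v 0 x = 0 :=
  Function.extend_apply' _ _ _ fun ⟨y, hy⟩ => hx (hy ▸ y.2)

theorem extend_domRestrict_intr_eqOn {Ω : Set V} {u : V → ℝ} (hu : ∀ x ∈ G.bdry Ω, u x = 0) :
    EqOn (Function.extend Subtype.val ((G.intr Ω).domRestrict u) 0) u Ω := fun x hx => by
  by_cases hxi : x ∈ G.intr Ω
  · exact Subtype.val_injective.extend_apply _ _ ⟨x, hxi⟩
  · rw [extend_eq_zero_of_not_mem _ hxi, hu x (not_not.1 fun h => hxi ⟨hx, h⟩)]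

variable (G)

theorem eventually_wNorm_extend_lt (s : Finset V) (t : Set V) [Fintype t] {ε : ℝ} (hε : 0 < ε) :
    ∀ᶠ v in 𝓝 (0 : t → ℝ), G.wNorm ↑s 1 2 (Function.extend Subtype.val v 0) < ε := by
  simp only [wNorm_one_two_eq_sqrt_energy]
  have hcont := ((G.continuous_energy s).comp
    (Function.ExtendByZero.linearMap ℝ (Subtype.val : t → V)).continuous_of_finiteDimensional).sqrt
  refine (hcont.tendsto' 0 0 ?_).eventually (gt_mem_nhds hε)
  simp [energy_eq_sum]

noncomputable def lapₗ : (V → ℝ) →ₗ[ℝ] V → ℝ where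
  toFun := G.lap
  map_add' u v := by
    ext x
    simp only [lap_eq_sum, Pi.add_apply, ← mul_add, ← sum_add_distrib]
    exact congrArg _ (sum_congr rfl fun y _ => by ring)
  map_smul' c u := by
    ext x
    simp only [lap_eq_sum, Pi.smul_apply, smul_eq_mul, RingHom.id_apply, mul_sum]
    exact sum_congr rfl fun y _ => by ring

noncomputable def negDirichletLap (Ω : Set V) : (G.intr Ω → ℝ) →ₗ[ℝ] G.intr Ω → ℝ :=
  LinearMap.funLeft ℝ ℝ Subtype.val ∘ₗ (-G.lapₗ) ∘ₗ Function.ExtendByZero.linearMap ℝ Subtype.val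

noncomputable def dirichletMap (Ω : Set V) (g : V → ℝ → ℝ) (v : G.intr Ω → ℝ) : G.intr Ω → ℝ :=
  G.negDirichletLap Ω v + fun x : G.intr Ω => g x (v x)

noncomputable instance (s : Finset V) : Fintype (G.intr ↑s) :=
  (s.finite_toSet.subset sdiff_subset).fintype

variable {G}

theorem negDirichletLap_apply {Ω : Set V} (v : G.intr Ω → ℝ) (x : G.intr Ω) :
    G.negDirichletLap Ω v x = -G.lap (Function.extend Subtype.val v 0) x := rfl

theorem negDirichletLap_injective {s : Finset V} (hconn : G.ConnectedIn ↑s)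
    (hbd : (G.bdry ↑s).Nonempty) : Function.Injective (G.negDirichletLap ↑s) := by
  refine (injective_iff_map_eq_zero _).2 fun v hv => ?_
  set u := Function.extend Subtype.val v (0 : V → ℝ)
  have hu : ∀ x ∉ G.intr ↑s, u x = 0 := fun x hx => extend_eq_zero_of_not_mem v hx
  have hE : G.energy s u = 0 := by
    rw [energy_eq_sum_mul_neg_lap hu]
    refine sum_eq_zero fun x _ => ?_
    by_cases hx : x ∈ G.intr ↑s
    · rw [show -G.lap u x = 0 from congrFun hv ⟨x, hx⟩, mul_zero, mul_zero]
    · rw [hu x hx, zero_mul]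
  obtain ⟨C, -, hC⟩ := exists_abs_le_mul_wNorm hconn hbd
  ext x
  have hx := hC u (fun z hz => hu z fun h => h.2 hz) x x.2.1
  rw [wNorm_one_two_eq_sqrt_energy, hE, Real.sqrt_zero, mul_zero, abs_nonpos_iff] at hx
  simpa [u, Subtype.val_injective.extend_apply] using hx

theorem exists_hasStrictFDerivAt_dirichletMap {s : Finset V} (hconn : G.ConnectedIn ↑s)
    (hbd : (G.bdry ↑s).Nonempty) {g : V → ℝ → ℝ}
    (hg : ∀ x ∈ G.intr ↑s, HasStrictDerivAt (g x) 0 0) :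
    ∃ L : (G.intr ↑s → ℝ) ≃L[ℝ] (G.intr ↑s → ℝ),
      HasStrictFDerivAt (G.dirichletMap ↑s g) (L : (G.intr ↑s → ℝ) →L[ℝ] _) 0 := by
  refine ⟨(LinearEquiv.ofInjectiveEndo _
    (negDirichletLap_injective hconn hbd)).toContinuousLinearEquiv, ?_⟩
  have hΦ := (G.negDirichletLap ↑s).toContinuousLinearMap.hasStrictFDerivAt.add
    (hasStrictFDerivAt_pi_comp fun x : G.intr ↑s => hg x x.2)
  rw [show (ContinuousLinearMap.pi fun x => (0 : ℝ) • ContinuousLinearMap.proj x) = 0 by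
    ext; simp, add_zero] at hΦ
  exact hΦ

theorem dirichletMap_zero (Ω : Set V) (g : V → ℝ → ℝ) :
    G.dirichletMap Ω g 0 = (G.intr Ω).domRestrict fun x => g x 0 := by
  ext x
  simp [dirichletMap]

theorem dirichletMap_domRestrict_eq_iff {Ω : Set V} {g : V → ℝ → ℝ} {u f : V → ℝ}
    (hu : ∀ x ∈ G.bdry Ω, u x = 0) :
    G.dirichletMap Ω g ((G.intr Ω).domRestrict u) = (G.intr Ω).domRestrict f ↔
      ∀ x ∈ G.intr Ω, -G.lap u x + g x (u x) = f x := by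
  simp only [funext_iff, Subtype.forall, dirichletMap, Pi.add_apply, negDirichletLap_apply,
    domRestrict_apply]
  exact forall₂_congr fun x hx => by rw [lap_congr hx (extend_domRestrict_intr_eqOn hu)]

end WLFG

/-- Lemma 5.2: for `g(x,·)` of class `C¹` with `∂_t g(x,0) = 0`,
and `f̄ = g(·,0)`, there exist `δ, ε > 0` such that for every `f ∈ L²(Ω)` with
`‖f - f̄‖_{L²(Ω)} < δ` the problem `-Δu + g(x,u) = f` in `Ω°`, `u = 0` on `∂Ω`,
admits a unique solution `u ∈ W^{1,2}_0(Ω)` with `‖u‖_{W^{1,2}_0(Ω)} < ε`. -/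
theorem dirichlet_local_wellposed {V : Type*} (G : WLFG V) (Ω : Set V)
    (hΩ : G.IsBoundedDomain Ω) (hint : (G.intr Ω).Nonempty) (hbd : (G.bdry Ω).Nonempty)
    (g : V → ℝ → ℝ)
    (hgC1 : ∀ x ∈ Ω, ContDiff ℝ 1 fun t => g x t)
    (hg'0 : ∀ x ∈ Ω, deriv (fun t => g x t) 0 = 0) :
    ∃ δ ε : ℝ, 0 < δ ∧ 0 < ε ∧ ∀ f : V → ℝ,
      G.lpNorm Ω 2 (fun x => f x - g x 0) < δ →
      ∃ u : V → ℝ,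
        ((∀ x ∈ G.intr Ω, -G.lap u x + g x (u x) = f x) ∧
          (∀ x ∈ G.bdry Ω, u x = 0) ∧ G.wNorm Ω 1 2 u < ε) ∧
        ∀ u' : V → ℝ,
          ((∀ x ∈ G.intr Ω, -G.lap u' x + g x (u' x) = f x) ∧
            (∀ x ∈ G.bdry Ω, u' x = 0) ∧ G.wNorm Ω 1 2 u' < ε) →
          Set.EqOn u' u Ω := by
  obtain ⟨hconn, hfin⟩ := hΩ
  obtain ⟨s, rfl⟩ := hfin.exists_finset_coe
  have hg : ∀ x ∈ G.intr ↑s, HasStrictDerivAt (g x) 0 0 := fun x hx => by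
    simpa [hg'0 x hx.1] using (hgC1 x hx.1).hasStrictDerivAt (x := 0) one_ne_zero
  obtain ⟨L, hΦ⟩ := WLFG.exists_hasStrictFDerivAt_dirichletMap hconn hbd hg
  obtain ⟨r, hr, hinj⟩ := hΦ.exists_ball_injOn
  obtain ⟨C, hC, hpoinc⟩ := WLFG.exists_abs_le_mul_wNorm hconn hbd
  obtain ⟨K, hK, hlp⟩ := WLFG.exists_abs_le_mul_lpNorm fun x hx =>
    WLFG.mes_pos_of_connectedIn hconn hint hbd hx
  set ext : (G.intr ↑s → ℝ) → V → ℝ := fun v => Function.extend Subtype.val v 0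
  have hT := Filter.Eventually.and (ball_mem_nhds (0 : G.intr ↑s → ℝ) hr)
    (G.eventually_wNorm_extend_lt s _ (div_pos hr hC))
  obtain ⟨δ, hδ, hball⟩ := Metric.mem_nhds_iff.1 (hΦ.map_nhds_eq_of_equiv ▸ image_mem_map hT)
  refine ⟨δ / K, r / C, by positivity, by positivity, fun f hf => ?_⟩
  obtain ⟨v, ⟨hvr, hvε⟩, hv⟩ := hball <| by
    rw [mem_ball_iff_norm, WLFG.dirichletMap_zero, ← mem_ball_zero_iff]
    exact domRestrict_mem_ball_zero hK hδ hf fun x hx => hlp _ x hx.1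
  have hvbd : ∀ x ∈ G.bdry ↑s, ext v x = 0 := fun x hx =>
    WLFG.extend_eq_zero_of_not_mem v fun h => h.2 hx
  refine ⟨ext v, ⟨(WLFG.dirichletMap_domRestrict_eq_iff hvbd).1 ?_, hvbd, hvε⟩,
    fun u' ⟨hu'eq, hu'bd, hu'ε⟩ => ?_⟩
  · rwa [show (G.intr ↑s).domRestrict (ext v) = v from
      Function.extend_comp Subtype.val_injective v 0]
  · have hu'v : (G.intr ↑s).domRestrict u' = v :=
      hinj (domRestrict_mem_ball_zero hC hr hu'ε fun x hx => hpoinc u' hu'bd x hx.1) hvr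
        (((WLFG.dirichletMap_domRestrict_eq_iff hu'bd).2 hu'eq).trans hv.symm)
    exact hu'v ▸ (WLFG.extend_domRestrict_intr_eqOn hu'bd).symm
end
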